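/- Let κ be an infinite cardinal, (ι, ≤) a κ-long directed preorder, G a group, and s : ι → Set X a monotone family of subgroups G_α of G with union G, where each G_α carries a group topology making it a topological group and for α ≤ β the inclusion G_α → G_β is a closed topological embedding. Endow G with the colimit space topology T (the finest topology making each inclusion G_α → G continuous). If the product space (G, T) × (G, T) has tightness at most κ, then (G, T) is a topological group; in particular the multiplication map (G, T) × (G, T) → (G, T) is jointly continuous. -/

import Mathlib

universe u

open TopologicalSpace

/-- The tightness of `X` (with the topology `t`) is at most `κ`. -/
def TightnessLE {X : Type u} (t : TopologicalSpace X) (κ : Cardinal.{u}) : Prop :=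
  ∀ (A : Set X) (x : X), x ∈ @closure X t A →
    ∃ C : Set X, C ⊆ A ∧ Cardinal.mk C ≤ κ ∧ x ∈ @closure X t C

/-!
Each `G_α` sits in the colimit `(G, T)` as a subspace: a set lying in `G_α` and closed there is
closed in every `G_β`, because the bonding maps are closed embeddings and the index set is
directed. Now a map out of a space of tightness `≤ κ` is continuous as soon as it is continuous
on each member of a family of subsets that swallows every `κ`-small set: a point of the closure
of `f ⁻¹' F` lies in the closure of a `κ`-small `C ⊆ f ⁻¹' F`, and `C` together with the point
fits into one member, on which `f` is continuous. Since `ι` is `κ`-long, the squares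
`G_α × G_α` form such a family for multiplication, and the `G_α` one for inversion, the
tightness of `(G, T)` being bounded by that of its square.
-/

open Topology Cardinal

abbrev colimitTopology {ι X : Type*} (S : ι → Set X) (t : ∀ i, TopologicalSpace (S i)) :
    TopologicalSpace X :=
  ⨆ i, coinduced (Subtype.val : S i → X) (t i)

section Colimit

variable {ι X : Type*} {S : ι → Set X} (t : ∀ i, TopologicalSpace (S i))

theorem continuous_val_colimitTopology (i : ι) :
    Continuous[t i, colimitTopology S t] (Subtype.val : S i → X) :=
  continuous_iff_coinduced_le.2 (le_iSup (fun j => coinduced (Subtype.val : S j → X) (t j)) i)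

variable [Preorder ι] [IsDirected ι (· ≤ ·)] (hS : Monotone S)
  (hemb : ∀ i j (h : i ≤ j), @IsClosedEmbedding _ _ (t i) (t j) (Set.inclusion (hS h)))
include hemb

theorem isClosed_colimitTopology_of_subset {i : ι} {A : Set X} (hAS : A ⊆ S i)
    (hA : IsClosed[t i] ((Subtype.val : S i → X) ⁻¹' A)) :
    IsClosed[colimitTopology S t] A := by
  refine isClosed_iSup_iff.2 fun j => isClosed_coinduced.2 ?_
  obtain ⟨k, hik, hjk⟩ := directed_of (· ≤ ·) i j
  have hAk : (Set.inclusion (hS hik)) '' ((Subtype.val : S i → X) ⁻¹' A)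
      = (Subtype.val : S k → X) ⁻¹' A := by
    ext x
    exact ⟨fun ⟨y, hy, hyx⟩ => hyx ▸ hy, fun hx => ⟨⟨x, hAS hx⟩, hx, rfl⟩⟩
  have hAk_closed : IsClosed[t k] ((Subtype.val : S k → X) ⁻¹' A) := by
    rw [← hAk]
    exact (hemb i k hik).isClosedMap _ hA
  exact @IsClosed.preimage _ _ (t j) (t k) _ (hemb j k hjk).continuous _ hAk_closed

theorem isEmbedding_val_colimitTopology (i : ι) :
    @IsEmbedding _ _ (t i) (colimitTopology S t) (Subtype.val : S i → X) := by
  let _ := colimitTopology S t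
  refine ⟨⟨le_antisymm (continuous_iff_le_induced.1 (continuous_val_colimitTopology t i)) ?_⟩,
    Subtype.val_injective⟩
  intro U hU
  -- `U` is the trace of the complement of the image of `Uᶜ`, which is closed in the colimit.
  have himage : IsClosed[colimitTopology S t] ((Subtype.val : S i → X) '' Uᶜ) := by
    refine isClosed_colimitTopology_of_subset t hS hemb (Subtype.coe_image_subset _ _) ?_
    rw [Set.preimage_image_eq _ Subtype.val_injective]
    exact hU.isClosed_compl
  refine (@isOpen_induced_iff _ _ (colimitTopology S t) U _).2
    ⟨_, himage.isOpen_compl, ?_⟩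
  rw [Set.preimage_compl, Set.preimage_image_eq _ Subtype.val_injective, compl_compl]

end Colimit

theorem TightnessLE.of_prod {X Y : Type u} [TopologicalSpace X] [TopologicalSpace Y] [Nonempty Y]
    {κ : Cardinal.{u}} (h : TightnessLE (inferInstance : TopologicalSpace (X × Y)) κ) :
    TightnessLE (inferInstance : TopologicalSpace X) κ := by
  intro A x hx
  obtain ⟨y⟩ := ‹Nonempty Y›
  have hxy : (x, y) ∈ closure (A ×ˢ {y}) := by
    rw [closure_prod_eq]
    exact ⟨hx, subset_closure rfl⟩
  obtain ⟨C, hCA, hCκ, hxyC⟩ := h _ _ hxy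
  exact ⟨Prod.fst '' C, fun _ ⟨c, hc, hcx⟩ => hcx ▸ (hCA hc).1, mk_image_le.trans hCκ,
    image_closure_subset_closure_image continuous_fst ⟨_, hxyC, rfl⟩⟩

theorem continuous_of_continuousOn_of_tightnessLE {ι : Type*} {X : Type u} {Y : Type*} [TopologicalSpace X]
    [TopologicalSpace Y] {κ : Cardinal.{u}} (hκ : ℵ₀ ≤ κ)
    (htight : TightnessLE (inferInstance : TopologicalSpace X) κ) {S : ι → Set X}
    (hsmall : ∀ A : Set X, #A ≤ κ → ∃ i, A ⊆ S i) {f : X → Y}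
    (hf : ∀ i, ContinuousOn f (S i)) : Continuous f := by
  refine continuous_iff_isClosed.2 fun F hF => isClosed_of_closure_subset fun x hx => ?_
  obtain ⟨C, hCF, hCκ, hxC⟩ := htight _ _ hx
  obtain ⟨i, hi⟩ := hsmall (insert x C)
    (mk_insert_le.trans (add_le_of_le hκ hCκ (one_le_aleph0.trans hκ)))
  have hfx : ContinuousWithinAt f C x :=
    (hf i x (hi (Set.mem_insert x C))).mono ((Set.subset_insert x C).trans hi)
  exact hF.closure_subset_iff.2 (Set.image_subset_iff.2 hCF) (hfx.mem_closure_image hxC)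

theorem Monotone.exists_subset_of_mk_le {ι X : Type u} [Preorder ι] {S : ι → Set X}
    (hS : Monotone S) (hcover : ∀ x, ∃ i, x ∈ S i) {κ : Cardinal.{u}}
    (hlong : ∀ C : Set ι, #C ≤ κ → ∃ ub, ∀ i ∈ C, i ≤ ub) {A : Set X} (hA : #A ≤ κ) :
    ∃ i, A ⊆ S i := by
  choose idx hidx using fun a : A => hcover a
  obtain ⟨j, hj⟩ := hlong (Set.range idx) (mk_range_le.trans hA)
  exact ⟨j, fun a ha => hS (hj _ ⟨⟨a, ha⟩, rfl⟩) (hidx ⟨a, ha⟩)⟩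

section Subgroup

variable {G : Type*} [Group G] {H : Subgroup G}

theorem Subgroup.range_subtypeVal : Set.range (Subtype.val : H → G) = H :=
  Subtype.range_val_subtype

variable [TopologicalSpace G] [TopologicalSpace H]

theorem Subgroup.continuousOn_mul_of_isEmbedding [ContinuousMul H]
    (hH : IsEmbedding (Subtype.val : H → G)) :
    ContinuousOn (fun p : G × G => p.1 * p.2) ((H : Set G) ×ˢ H) := by
  rw [← Subgroup.range_subtypeVal, ← Set.range_prodMap, ← Set.image_univ,
    (hH.prodMap hH).isInducing.continuousOn_image_iff, continuousOn_univ]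
  exact hH.continuous.comp continuous_mul

theorem Subgroup.continuousOn_inv_of_isEmbedding [ContinuousInv H]
    (hH : IsEmbedding (Subtype.val : H → G)) :
    ContinuousOn (fun g : G => g⁻¹) H := by
  rw [← Subgroup.range_subtypeVal, ← Set.image_univ, hH.isInducing.continuousOn_image_iff,
    continuousOn_univ]
  exact hH.continuous.comp continuous_inv

end Subgroup

/-- Let `κ` be an infinite cardinal, `(ι, ≤)` a `κ`-long directed preorder,
`G` a group and `{G_α}` a monotone family of subgroups with union `G`, each carrying a group
topology making it a topological group, the bonding inclusions being closed embeddings.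
If `T` is the colimit space topology on `G` and `(G, T) × (G, T)` has tightness at most `κ`,
then `(G, T)` is a topological group; in particular multiplication is jointly continuous. -/
theorem colimit_topologicalGroup_of_tight_sq
    {ι : Type u} [Preorder ι] [IsDirected ι (· ≤ ·)] {G : Type u} [Group G]
    (κ : Cardinal.{u}) (hκ : Cardinal.aleph0 ≤ κ)
    (hlong : ∀ C : Set ι, Cardinal.mk C ≤ κ → ∃ ub, ∀ i ∈ C, i ≤ ub)
    (s : ι → Subgroup G) (hs : Monotone s) (hsU : ∀ g : G, ∃ α, g ∈ s α)
    (t : ∀ α, TopologicalSpace (s α))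
    (htg : ∀ α, @IsTopologicalGroup (s α) (t α) _)
    (hemb : ∀ α β (h : α ≤ β),
      @Topology.IsClosedEmbedding _ _ (t α) (t β) (Subgroup.inclusion (hs h)))
    (T : TopologicalSpace G)
    (hT : T = ⨆ α, TopologicalSpace.coinduced (Subtype.val : s α → G) (t α))
    (htight : TightnessLE (@instTopologicalSpaceProd G G T T) κ) :
    @IsTopologicalGroup G T _ ∧
      @Continuous (G × G) G (@instTopologicalSpaceProd G G T T) T
        (fun p => p.1 * p.2) := by
  subst hT
  let SG : ι → Set G := fun α => s α
  have hSG : Monotone SG := fun _ _ h => hs h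
  let _ : TopologicalSpace G := colimitTopology SG t
  have hval : ∀ α, IsEmbedding (Subtype.val : s α → G) :=
    isEmbedding_val_colimitTopology t hSG hemb
  have hcover : ∀ p : G × G, ∃ α, p ∈ SG α ×ˢ SG α := fun ⟨x, y⟩ => by
    obtain ⟨α, hx⟩ := hsU x
    obtain ⟨β, hy⟩ := hsU y
    obtain ⟨γ, hαγ, hβγ⟩ := directed_of (· ≤ ·) α β
    exact ⟨γ, hs hαγ hx, hs hβγ hy⟩
  have hmul : Continuous fun p : G × G => p.1 * p.2 :=
    continuous_of_continuousOn_of_tightnessLE hκ htight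
      (fun _ => Monotone.exists_subset_of_mk_le (fun _ _ h => Set.prod_mono (hs h) (hs h))
        hcover hlong)
      fun α => let _ := t α; have := htg α; Subgroup.continuousOn_mul_of_isEmbedding (hval α)
  have hinv : Continuous fun g : G => g⁻¹ :=
    continuous_of_continuousOn_of_tightnessLE hκ htight.of_prod (fun _ => hSG.exists_subset_of_mk_le hsU hlong)
      fun α => let _ := t α; have := htg α; Subgroup.continuousOn_inv_of_isEmbedding (hval α)
  exact ⟨{ continuous_mul := hmul, continuous_inv := hinv }, hmul⟩
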